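/- arXiv:2211.09044 — 4 statements merged into one kernel-verified Lean document; each statement's English description precedes it below -/
import Mathlib

section
/- Let D ≥ 1, r > 0, c > 0, and let μ be a Borel measure on ℝ^D of the form μ = δ₀ + ν, where ν is a nonnegative measure supported in {x ∈ ℝ^D : |x| ≥ r}, and suppose μ is tempered in the sense that ∫ (1+|x|)^{−s} dμ(x) < ∞ for some s > 0. Assume that for every nonnegative real-valued Schwartz function h : ℝ^D → ℝ, the integral ∫ ĥ dμ is real and satisfies ∫ ĥ dμ ≥ c·h(0) (i.e. μ̂ ≥ c δ₀ as a tempered distribution). Then every Schwartz function f : ℝ^D → ℝ with f(x) ≤ 0 for |x| ≥ r and with f̂ taking nonnegative real values everywhere satisfies f(0) ≥ c·f̂(0). Consequently the Cohn–Elkies linear programming bound for center density in ℝ^D is at least c·(r/2)^D. -/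
open MeasureTheory FourierTransform SchwartzMap

/-!
Test `μ̂ ≥ c δ₀` against `h = f̂`, which is a real, nonnegative Schwartz function. By Fourier
inversion `ĥ(x) = f(-x)`, so `c f̂(0) ≤ ∫ f(-x) dμ = f(0) + ∫ f(-x) dν ≤ f(0)`, since `f(-x) ≤ 0`
on the support of `ν`.
-/

theorem MeasureTheory.Measure.HasTemperateGrowth.of_integrable_rpow_neg
    {E : Type*} [NormedAddCommGroup E] [MeasurableSpace E] [OpensMeasurableSpace E]
    {μ : Measure E} {s : ℝ} (hs : Integrable (fun x => (1 + ‖x‖) ^ (-s)) μ) :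
    μ.HasTemperateGrowth := by
  have hmeas : Measurable fun x : E => (1 + ‖x‖) ^ (-(⌈s⌉₊ : ℝ)) :=
    (measurable_const.add measurable_norm).pow_const _
  refine ⟨⌈s⌉₊, hs.mono' hmeas.aestronglyMeasurable (Filter.Eventually.of_forall fun x => ?_)⟩
  have hx : 1 ≤ 1 + ‖x‖ := le_add_of_nonneg_right (norm_nonneg x)
  rw [Real.norm_of_nonneg (by positivity)]
  exact Real.rpow_le_rpow_of_exponent_le hx (neg_le_neg (Nat.le_ceil s))

theorem SchwartzMap.exists_ofReal_eq_of_im_eq_zero {E : Type*} [NormedAddCommGroup E]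
    [NormedSpace ℝ E] (g : 𝓢(E, ℂ)) (hg : ∀ x, (g x).im = 0) :
    ∃ h : 𝓢(E, ℝ), ∀ x, (h x : ℂ) = g x :=
  ⟨g.postcompCLM Complex.reCLM, fun x => Complex.ext (by simp) (by simp [hg])⟩

theorem MeasureTheory.integral_dirac_add_le {α : Type*} [MeasurableSpace α]
    [MeasurableSingletonClass α] {ν : Measure α} {φ : α → ℝ} (a : α)
    (hφ : Integrable φ (Measure.dirac a + ν)) (hν : ∀ᵐ x ∂ν, φ x ≤ 0) :
    ∫ x, φ x ∂(Measure.dirac a + ν) ≤ φ a := by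
  obtain ⟨hφa, hφν⟩ := integrable_add_measure.mp hφ
  rw [integral_add_measure hφa hφν, integral_dirac]
  linarith [integral_nonpos_of_ae hν]

section

variable {V : Type*} [NormedAddCommGroup V] [InnerProductSpace ℝ V] [FiniteDimensional ℝ V]
  [MeasurableSpace V] [BorelSpace V]

theorem SchwartzMap.fourier_fourier_apply {E : Type*} [NormedAddCommGroup E] [NormedSpace ℂ E]
    [CompleteSpace E] (g : 𝓢(V, E)) (x : V) : 𝓕 (𝓕 (g : V → E)) x = g (-x) := by
  calc 𝓕 (𝓕 (g : V → E)) x = 𝓕⁻ (𝓕 (g : V → E)) (-x) := by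
        rw [Real.fourierInv_eq_fourier_neg, neg_neg]
    _ = g (-x) := congrFun (g.continuous.fourierInv_fourier_eq g.integrable (𝓕 g).integrable) (-x)

theorem SchwartzMap.mul_re_fourier_zero_le_apply_zero (ν : Measure V)
    [(Measure.dirac (0 : V) + ν).HasTemperateGrowth] {r c : ℝ} (hsupp : ν {x | ‖x‖ < r} = 0)
    (hμhat : ∀ h : 𝓢(V, ℝ), (∀ x, 0 ≤ h x) →
      c * h 0 ≤ (∫ x, 𝓕 (fun y => (h y : ℂ)) x ∂(Measure.dirac 0 + ν)).re)
    (f : 𝓢(V, ℝ)) (hf : ∀ x, r ≤ ‖x‖ → f x ≤ 0)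
    (hf_re : ∀ ξ, 0 ≤ (𝓕 (fun y => (f y : ℂ)) ξ).re)
    (hf_im : ∀ ξ, (𝓕 (fun y => (f y : ℂ)) ξ).im = 0) :
    c * (𝓕 (fun y => (f y : ℂ)) 0).re ≤ f 0 := by
  let fℂ : 𝓢(V, ℂ) := f.postcompCLM Complex.ofRealCLM
  obtain ⟨h, hh⟩ := exists_ofReal_eq_of_im_eq_zero (𝓕 fℂ) hf_im
  have h_eq_fourier : (fun y => (h y : ℂ)) = 𝓕 (fun y => (f y : ℂ)) := funext hh
  have h_re (x : V) : h x = (𝓕 (fun y => (f y : ℂ)) x).re := by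
    rw [← h_eq_fourier, Complex.ofReal_re]
  let fneg : 𝓢(V, ℝ) := compCLMOfContinuousLinearEquiv ℝ (ContinuousLinearEquiv.neg ℝ) f
  have hfneg : 𝓕 (fun y => (h y : ℂ)) = fun x => (fneg x : ℂ) := by
    rw [h_eq_fourier]
    ext x
    exact fourier_fourier_apply fℂ x
  have hν : ∀ᵐ x ∂ν, fneg x ≤ 0 := by
    refine measure_mono_null (fun x hx => ?_) hsupp
    exact lt_of_not_ge fun hr => hx (hf (-x) (by simpa using hr))
  calc c * (𝓕 (fun y => (f y : ℂ)) 0).re = c * h 0 := by rw [h_re]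
    _ ≤ (∫ x, 𝓕 (fun y => (h y : ℂ)) x ∂(Measure.dirac 0 + ν)).re :=
        hμhat h fun x => (h_re x).symm ▸ hf_re x
    _ = ∫ x, fneg x ∂(Measure.dirac 0 + ν) := by
        simp only [hfneg, integral_complex_ofReal, Complex.ofReal_re]
    _ ≤ f 0 := by simpa [fneg] using integral_dirac_add_le 0 fneg.integrable hν

end

theorem lp_weak_duality_general
    (D : ℕ) (r c : ℝ) (hr : 0 < r)
    (ν μ : Measure (EuclideanSpace ℝ (Fin D)))
    (hμ : μ = Measure.dirac 0 + ν)
    (hsupp : ν {x : EuclideanSpace ℝ (Fin D) | ‖x‖ < r} = 0)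
    (htemp : ∃ s : ℝ, 0 < s ∧
      Integrable (fun x : EuclideanSpace ℝ (Fin D) => (1 + ‖x‖) ^ (-s)) μ)
    (hμhat : ∀ h : 𝓢(EuclideanSpace ℝ (Fin D), ℝ), (∀ x, 0 ≤ h x) →
      (∫ x, 𝓕 (fun y => (h y : ℂ)) x ∂μ).im = 0 ∧
      c * h 0 ≤ (∫ x, 𝓕 (fun y => (h y : ℂ)) x ∂μ).re) :
    ∀ f : 𝓢(EuclideanSpace ℝ (Fin D), ℝ),
      (∀ x, r ≤ ‖x‖ → f x ≤ 0) →
      (∀ ξ, 0 ≤ (𝓕 (fun y => (f y : ℂ)) ξ).re ∧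
        (𝓕 (fun y => (f y : ℂ)) ξ).im = 0) →
      c * (𝓕 (fun y => (f y : ℂ)) 0).re ≤ f 0 ∧
      (0 < (𝓕 (fun y => (f y : ℂ)) 0).re →
        c * (r / 2) ^ D ≤ (r / 2) ^ D * f 0 / (𝓕 (fun y => (f y : ℂ)) 0).re) := by
  intro f hf hf_hat
  subst hμ
  obtain ⟨s, -, hs⟩ := htemp
  have := Measure.HasTemperateGrowth.of_integrable_rpow_neg hs
  have key := f.mul_re_fourier_zero_le_apply_zero ν hsupp (fun h hh => (hμhat h hh).2) hf
    (fun ξ => (hf_hat ξ).1) (fun ξ => (hf_hat ξ).2)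
  refine ⟨key, fun hpos => ?_⟩
  rw [mul_div_assoc, mul_comm c]
  exact mul_le_mul_of_nonneg_left ((le_div_iff₀ hpos).mpr key) (by positivity)

/-- Weak duality for the Cohn–Elkies linear program (Theorem 1.5 of the paper):
if `μ = δ₀ + ν` is a tempered measure on `ℝ^D` with `ν ≥ 0` supported in
`{|x| ≥ r}` and `μ̂ ≥ c·δ₀` (tested against Fourier transforms of nonnegative
Schwartz functions), then every Schwartz function `f` with `f ≤ 0` outside
radius `r` and `f̂ ≥ 0` satisfies `f(0) ≥ c·f̂(0)`; consequently the
Cohn–Elkies LP bound for center density in `ℝ^D` is at least `c·(r/2)^D`. -/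
theorem lp_weak_duality
    (D : ℕ) (hD : 0 < D) (r c : ℝ) (hr : 0 < r) (hc : 0 < c)
    (ν μ : Measure (EuclideanSpace ℝ (Fin D)))
    (hμ : μ = Measure.dirac 0 + ν)
    (hsupp : ν {x : EuclideanSpace ℝ (Fin D) | ‖x‖ < r} = 0)
    (htemp : ∃ s : ℝ, 0 < s ∧
      Integrable (fun x : EuclideanSpace ℝ (Fin D) => (1 + ‖x‖) ^ (-s)) μ)
    (hμhat : ∀ h : 𝓢(EuclideanSpace ℝ (Fin D), ℝ), (∀ x, 0 ≤ h x) →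
      (∫ x, 𝓕 (fun y => (h y : ℂ)) x ∂μ).im = 0 ∧
      c * h 0 ≤ (∫ x, 𝓕 (fun y => (h y : ℂ)) x ∂μ).re) :
    ∀ f : 𝓢(EuclideanSpace ℝ (Fin D), ℝ),
      (∀ x, r ≤ ‖x‖ → f x ≤ 0) →
      (∀ ξ, 0 ≤ (𝓕 (fun y => (f y : ℂ)) ξ).re ∧
        (𝓕 (fun y => (f y : ℂ)) ξ).im = 0) →
      c * (𝓕 (fun y => (f y : ℂ)) 0).re ≤ f 0 ∧
      (0 < (𝓕 (fun y => (f y : ℂ)) 0).re →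
        c * (r / 2) ^ D ≤ (r / 2) ^ D * f 0 / (𝓕 (fun y => (f y : ℂ)) 0).re) :=
  lp_weak_duality_general D r c hr ν μ hμ hsupp htemp hμhat
end

section
/- Let χ₃ be the nontrivial Dirichlet character modulo 3 and χ₄ the nontrivial Dirichlet character modulo 4, and define σ₃⁺(n) = Σ_{d|n} d²·χ₃(n/d) and σ₄⁺(n) = Σ_{d|n} d²·χ₄(n/d). Then for every positive integer n₀ not divisible by 2 or 3, ∏_{p prime, p ≡ 7 (mod 12)} (p²−1)/(p²+1) ≤ σ₄⁺(n₀)/σ₃⁺(n₀) ≤ ∏_{p prime, p ≡ 5 (mod 12)} (p²+1)/(p²−1), where the products run over all primes in the indicated congruence classes (and converge). -/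
/-- The nontrivial Dirichlet character modulo 3, as a function on `ℕ`. -/
noncomputable def chi3 (n : ℕ) : ℝ :=
  if n % 3 = 1 then 1 else if n % 3 = 2 then -1 else 0

/-- The nontrivial Dirichlet character modulo 4, as a function on `ℕ`. -/
noncomputable def chi4 (n : ℕ) : ℝ :=
  if n % 4 = 1 then 1 else if n % 4 = 3 then -1 else 0

/-- The twisted divisor sum `σ₃⁺(n) = Σ_{d|n} d²·χ₃(n/d)`. -/
noncomputable def sigma3Plus (n : ℕ) : ℝ :=
  ∑ d ∈ n.divisors, (d : ℝ) ^ 2 * chi3 (n / d)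

/-- The twisted divisor sum `σ₄⁺(n) = Σ_{d|n} d²·χ₄(n/d)`. -/
noncomputable def sigma4Plus (n : ℕ) : ℝ :=
  ∑ d ∈ n.divisors, (d : ℝ) ^ 2 * chi4 (n / d)

/-!
Both σ₃⁺ and σ₄⁺ are Dirichlet convolutions of `n ↦ n²` with a completely multiplicative
character, hence multiplicative, and at a prime power `p^k` they equal
`Σ_{j ≤ k} p^{2j} χ(p)^{k-j}`. For `p` coprime to 6 this local factor only depends on
`χ(p) = ±1`, and the characters agree unless `p ≡ 5` or `p ≡ 7 (mod 12)`. Writing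
`A = Σ_j p^{2j}` and `B = Σ_j p^{2j} (-1)^{k-j}`, the geometric sum formula gives
`(p² - 1) A ≤ (p² + 1) B ≤ (p² + 1) A`, so the local ratio lies in
`[(p² - 1)/(p² + 1), 1]` when `p ≡ 7` and in `[1, (p² + 1)/(p² - 1)]` when `p ≡ 5`.
Multiplying over the prime factors of `n₀` and comparing with the full products, whose factors
are all on the same side of 1, gives the bounds.
-/

open Finset Real

theorem chi3_mul (m n : ℕ) : chi3 (m * n) = chi3 m * chi3 n := by
  have hm := Nat.mod_lt m three_pos
  have hn := Nat.mod_lt n three_pos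
  simp only [chi3, Nat.mul_mod m n]
  interval_cases m % 3 <;> interval_cases n % 3 <;> norm_num

theorem chi4_mul (m n : ℕ) : chi4 (m * n) = chi4 m * chi4 n := by
  have hm := Nat.mod_lt m four_pos
  have hn := Nat.mod_lt n four_pos
  simp only [chi4, Nat.mul_mod m n]
  interval_cases m % 4 <;> interval_cases n % 4 <;> norm_num

noncomputable def chi3Hom : ℕ →*₀ ℝ where
  toFun := chi3
  map_zero' := by simp [chi3]
  map_one' := by simp [chi3]
  map_mul' := chi3_mul

noncomputable def chi4Hom : ℕ →*₀ ℝ where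
  toFun := chi4
  map_zero' := by simp [chi4]
  map_one' := by simp [chi4]
  map_mul' := chi4_mul

theorem neg_one_pow_le_one {R : Type*} [Ring R] [LinearOrder R] [IsOrderedRing R] (n : ℕ) :
    (-1 : R) ^ n ≤ 1 :=
  (le_abs_self _).trans (abs_neg_one_pow n).le

section TwistedGeomSum

noncomputable def twistedGeomSum (q ε : ℝ) (k : ℕ) : ℝ :=
  ∑ j ∈ range (k + 1), q ^ j * ε ^ (k - j)

theorem twistedGeomSum_mul_sub (q ε : ℝ) (k : ℕ) :
    twistedGeomSum q ε k * (q - ε) = q ^ (k + 1) - ε ^ (k + 1) := by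
  simp [twistedGeomSum, ← geom_sum₂_mul]

variable {q : ℝ} (k : ℕ)

theorem twistedGeomSum_neg_one_le (hq : 0 ≤ q) : twistedGeomSum q (-1) k ≤ twistedGeomSum q 1 k :=
  sum_le_sum fun j _ => by
    rw [one_pow, mul_one]
    exact mul_le_of_le_one_right (pow_nonneg hq j) (neg_one_pow_le_one _)

theorem sub_one_mul_twistedGeomSum_one_le :
    (q - 1) * twistedGeomSum q 1 k ≤ (q + 1) * twistedGeomSum q (-1) k := by
  have h1 := twistedGeomSum_mul_sub q 1 k
  have h2 := twistedGeomSum_mul_sub q (-1) k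
  have := neg_one_pow_le_one (R := ℝ) (k + 1)
  rw [sub_neg_eq_add] at h2
  rw [one_pow] at h1
  linarith

theorem twistedGeomSum_neg_one_pos (hq : 1 < q) : 0 < twistedGeomSum q (-1) k := by
  have h := twistedGeomSum_mul_sub q (-1) k
  have := neg_one_pow_le_one (R := ℝ) (k + 1)
  have : 1 < q ^ (k + 1) := one_lt_pow₀ hq k.succ_ne_zero
  rw [sub_neg_eq_add] at h
  exact (mul_pos_iff_of_pos_right (show 0 < q + 1 by linarith)).1 (by linarith)

theorem sub_one_div_add_one_le_div_twistedGeomSum (hq : 1 < q) :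
    (q - 1) / (q + 1) ≤ twistedGeomSum q (-1) k / twistedGeomSum q 1 k := by
  have hB := twistedGeomSum_neg_one_pos k hq
  have hA := hB.trans_le (twistedGeomSum_neg_one_le k (by linarith))
  rw [div_le_div_iff₀ (by linarith) hA]
  linarith [sub_one_mul_twistedGeomSum_one_le k (q := q)]

theorem div_twistedGeomSum_le_add_one_div_sub_one (hq : 1 < q) :
    twistedGeomSum q 1 k / twistedGeomSum q (-1) k ≤ (q + 1) / (q - 1) := by
  rw [div_le_div_iff₀ (twistedGeomSum_neg_one_pos k hq) (by linarith)]
  linarith [sub_one_mul_twistedGeomSum_one_le k (q := q)]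

end TwistedGeomSum

section TwistedSigma

open ArithmeticFunction

def MonoidWithZeroHom.toArithmeticFunction {R : Type*} [MonoidWithZero R] (χ : ℕ →*₀ R) :
    ArithmeticFunction R :=
  ⟨χ, map_zero χ⟩

theorem MonoidWithZeroHom.isMultiplicative_toArithmeticFunction {R : Type*} [MonoidWithZero R]
    (χ : ℕ →*₀ R) : χ.toArithmeticFunction.IsMultiplicative :=
  ⟨map_one χ, fun _ => map_mul χ _ _⟩

noncomputable def twistedSigma (χ : ℕ →*₀ ℝ) : ArithmeticFunction ℝ :=
  (pow 2 : ArithmeticFunction ℕ) * χ.toArithmeticFunction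

variable (χ : ℕ →*₀ ℝ)

theorem twistedSigma_apply (n : ℕ) :
    twistedSigma χ n = ∑ d ∈ n.divisors, (d : ℝ) ^ 2 * χ (n / d) := by
  rw [twistedSigma, mul_apply, ← Nat.sum_divisorsAntidiagonal fun a b => (a : ℝ) ^ 2 * χ b]
  simp [pow_apply, MonoidWithZeroHom.toArithmeticFunction]

theorem isMultiplicative_twistedSigma : (twistedSigma χ).IsMultiplicative :=
  isMultiplicative_pow.natCast.mul χ.isMultiplicative_toArithmeticFunction

theorem twistedSigma_apply_prime_pow {p : ℕ} (hp : p.Prime) (k : ℕ) :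
    twistedSigma χ (p ^ k) = twistedGeomSum ((p : ℝ) ^ 2) (χ p) k := by
  rw [twistedSigma_apply, Nat.sum_divisors_prime_pow hp, twistedGeomSum]
  refine sum_congr rfl fun j hj => ?_
  rw [Nat.pow_div (Nat.lt_succ_iff.mp (mem_range.mp hj)) hp.pos, map_pow]
  push_cast
  ring

theorem twistedSigma_eq_prod {n : ℕ} (hn : n ≠ 0) :
    twistedSigma χ n =
      ∏ p ∈ n.primeFactors, twistedGeomSum ((p : ℝ) ^ 2) (χ p) (n.factorization p) := by
  rw [(isMultiplicative_twistedSigma χ).multiplicative_factorization _ hn, Finsupp.prod,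
    Nat.support_factorization]
  exact prod_congr rfl fun p hp =>
    twistedSigma_apply_prime_pow χ (Nat.prime_of_mem_primeFactors hp) _

end TwistedSigma

noncomputable def localRatio (p k : ℕ) : ℝ :=
  twistedGeomSum ((p : ℝ) ^ 2) (chi4 p) k / twistedGeomSum ((p : ℝ) ^ 2) (chi3 p) k

theorem sigma4Plus_div_sigma3Plus_eq_prod {n : ℕ} (hn : n ≠ 0) :
    sigma4Plus n / sigma3Plus n = ∏ p ∈ n.primeFactors, localRatio p (n.factorization p) := by
  have h3 : sigma3Plus n = twistedSigma chi3Hom n := (twistedSigma_apply chi3Hom n).symm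
  have h4 : sigma4Plus n = twistedSigma chi4Hom n := (twistedSigma_apply chi4Hom n).symm
  rw [h3, h4, twistedSigma_eq_prod _ hn, twistedSigma_eq_prod _ hn, ← prod_div_distrib]
  rfl

theorem localRatio_bounds {p : ℕ} (hp : 2 ≤ p) (h2 : ¬ 2 ∣ p) (h3 : ¬ 3 ∣ p) (k : ℕ) :
    (if p % 12 = 7 then ((p : ℝ) ^ 2 - 1) / ((p : ℝ) ^ 2 + 1) else 1) ≤ localRatio p k ∧
      localRatio p k ≤ if p % 12 = 5 then ((p : ℝ) ^ 2 + 1) / ((p : ℝ) ^ 2 - 1) else 1 := by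
  have hq : 1 < (p : ℝ) ^ 2 := one_lt_pow₀ (by exact_mod_cast hp) two_ne_zero
  have hB := twistedGeomSum_neg_one_pos k hq
  have hBA := twistedGeomSum_neg_one_le k (q := (p : ℝ) ^ 2) (by positivity)
  have hA := hB.trans_le hBA
  have : p % 12 = 1 ∨ p % 12 = 5 ∨ p % 12 = 7 ∨ p % 12 = 11 := by omega
  rcases this with h | h | h | h
  · simp [localRatio, chi3, chi4, h, (by omega : p % 3 = 1), (by omega : p % 4 = 1), hA.ne']
  · simp only [localRatio, chi3, chi4, h, (by omega : p % 3 = 2), (by omega : p % 4 = 1),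
      Nat.reduceEqDiff, ↓reduceIte]
    exact ⟨(one_le_div hB).2 hBA, div_twistedGeomSum_le_add_one_div_sub_one k hq⟩
  · simp only [localRatio, chi3, chi4, h, (by omega : p % 3 = 1), (by omega : p % 4 = 3),
      Nat.reduceEqDiff, ↓reduceIte]
    exact ⟨sub_one_div_add_one_le_div_twistedGeomSum k hq, (div_le_one hA).2 hBA⟩
  · simp [localRatio, chi3, chi4, h, (by omega : p % 3 = 2), (by omega : p % 4 = 3), hB.ne']

theorem Real.prod_le_tprod_of_one_le {ι : Type*} {f : ι → ℝ} (hf : ∀ i, 1 ≤ f i)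
    (hlog : Summable fun i => log (f i)) (s : Finset ι) : ∏ i ∈ s, f i ≤ ∏' i, f i := by
  have hpos i : 0 < f i := one_pos.trans_le (hf i)
  rw [← rexp_tsum_eq_tprod hpos hlog, ← exp_log (prod_pos fun i _ => hpos i), exp_le_exp,
    log_prod fun i _ => (hpos i).ne']
  exact hlog.sum_le_tsum s fun i _ => log_nonneg (hf i)

theorem Real.tprod_le_prod_of_le_one {ι : Type*} {f : ι → ℝ} (hpos : ∀ i, 0 < f i)
    (hf : ∀ i, f i ≤ 1) (hlog : Summable fun i => log (f i)) (s : Finset ι) :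
    ∏' i, f i ≤ ∏ i ∈ s, f i := by
  rw [← rexp_tsum_eq_tprod hpos hlog, ← exp_log (prod_pos fun i _ => hpos i), exp_le_exp,
    log_prod fun i _ => (hpos i).ne', ← neg_le_neg_iff, ← tsum_neg, ← sum_neg_distrib]
  exact hlog.neg.sum_le_tsum s fun i _ => neg_nonneg.2 (log_nonpos (hpos i).le (hf i))

section SquareRatios

variable {x : ℝ}

theorem one_le_sq_add_one_div_sq_sub_one (hx : 1 < x) : 1 ≤ (x ^ 2 + 1) / (x ^ 2 - 1) := by
  rw [one_le_div (by nlinarith)]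
  linarith

theorem sq_sub_one_div_sq_add_one_pos (hx : 1 < x) : 0 < (x ^ 2 - 1) / (x ^ 2 + 1) :=
  div_pos (by nlinarith) (by positivity)

theorem sq_sub_one_div_sq_add_one_le_one : (x ^ 2 - 1) / (x ^ 2 + 1) ≤ 1 := by
  rw [div_le_one (by positivity)]
  linarith

theorem log_sq_add_one_div_sq_sub_one_le (hx : 2 ≤ x) :
    log ((x ^ 2 + 1) / (x ^ 2 - 1)) ≤ 4 * (1 / x ^ 2) := by
  have hx2 : 0 < x ^ 2 - 1 := by nlinarith
  calc log ((x ^ 2 + 1) / (x ^ 2 - 1))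
      _ ≤ (x ^ 2 + 1) / (x ^ 2 - 1) - 1 := log_le_sub_one_of_pos (by positivity)
      _ = 2 / (x ^ 2 - 1) := by field_simp; ring
      _ ≤ 4 * (1 / x ^ 2) := by
        rw [mul_one_div, div_le_div_iff₀ hx2 (by positivity)]
        nlinarith

variable {P : ℕ → Prop} (hP : ∀ n, P n → 2 ≤ n)
include hP

theorem summable_log_sq_add_one_div_sq_sub_one :
    Summable fun n : {n // P n} => log ((((n : ℕ) : ℝ) ^ 2 + 1) / (((n : ℕ) : ℝ) ^ 2 - 1)) := by
  have hx (n : {n // P n}) : (2 : ℝ) ≤ (n : ℕ) := by exact_mod_cast hP n n.2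
  refine (((summable_one_div_nat_pow.2 one_lt_two).mul_left 4).comp_injective
    Subtype.val_injective).of_nonneg_of_le (fun n => ?_) (fun n => ?_)
  · exact log_nonneg (one_le_sq_add_one_div_sq_sub_one (by linarith [hx n]))
  · exact log_sq_add_one_div_sq_sub_one_le (hx n)

theorem summable_log_sq_sub_one_div_sq_add_one :
    Summable fun n : {n // P n} => log ((((n : ℕ) : ℝ) ^ 2 - 1) / (((n : ℕ) : ℝ) ^ 2 + 1)) := by
  refine (summable_log_sq_add_one_div_sq_sub_one hP).neg.congr fun n => ?_
  rw [← log_inv, inv_div]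

theorem multipliable_sq_add_one_div_sq_sub_one :
    Multipliable fun n : {n // P n} => (((n : ℕ) : ℝ) ^ 2 + 1) / (((n : ℕ) : ℝ) ^ 2 - 1) :=
  multipliable_of_summable_log
    (fun n => one_pos.trans_le (one_le_sq_add_one_div_sq_sub_one (by exact_mod_cast hP n n.2)))
    (summable_log_sq_add_one_div_sq_sub_one hP)

theorem multipliable_sq_sub_one_div_sq_add_one :
    Multipliable fun n : {n // P n} => (((n : ℕ) : ℝ) ^ 2 - 1) / (((n : ℕ) : ℝ) ^ 2 + 1) :=
  multipliable_of_summable_log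
    (fun n => sq_sub_one_div_sq_add_one_pos (by exact_mod_cast hP n n.2))
    (summable_log_sq_sub_one_div_sq_add_one hP)

theorem prod_ite_le_tprod_sq_add_one_div_sq_sub_one [DecidablePred P] (s : Finset ℕ) :
    ∏ n ∈ s, (if P n then ((n : ℝ) ^ 2 + 1) / ((n : ℝ) ^ 2 - 1) else 1) ≤
      ∏' n : {n // P n}, (((n : ℕ) : ℝ) ^ 2 + 1) / (((n : ℕ) : ℝ) ^ 2 - 1) := by
  rw [← prod_filter, ← prod_subtype_eq_prod_filter]
  exact prod_le_tprod_of_one_le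
    (fun n => one_le_sq_add_one_div_sq_sub_one (by exact_mod_cast hP n n.2))
    (summable_log_sq_add_one_div_sq_sub_one hP) _

theorem tprod_sq_sub_one_div_sq_add_one_le_prod_ite [DecidablePred P] (s : Finset ℕ) :
    ∏' n : {n // P n}, (((n : ℕ) : ℝ) ^ 2 - 1) / (((n : ℕ) : ℝ) ^ 2 + 1) ≤
      ∏ n ∈ s, (if P n then ((n : ℝ) ^ 2 - 1) / ((n : ℝ) ^ 2 + 1) else 1) := by
  rw [← prod_filter, ← prod_subtype_eq_prod_filter]
  exact tprod_le_prod_of_le_one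
    (fun n => sq_sub_one_div_sq_add_one_pos (by exact_mod_cast hP n n.2))
    (fun _ => sq_sub_one_div_sq_add_one_le_one)
    (summable_log_sq_sub_one_div_sq_add_one hP) _

end SquareRatios

theorem prod_ite_le_sigma4Plus_div_sigma3Plus_le_prod_ite {n : ℕ} (hn : n ≠ 0) (h2 : ¬ 2 ∣ n)
    (h3 : ¬ 3 ∣ n) :
    ∏ p ∈ n.primeFactors,
        (if p.Prime ∧ p % 12 = 7 then ((p : ℝ) ^ 2 - 1) / ((p : ℝ) ^ 2 + 1) else 1) ≤
      sigma4Plus n / sigma3Plus n ∧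
    sigma4Plus n / sigma3Plus n ≤ ∏ p ∈ n.primeFactors,
        (if p.Prime ∧ p % 12 = 5 then ((p : ℝ) ^ 2 + 1) / ((p : ℝ) ^ 2 - 1) else 1) := by
  have hprime : ∀ p ∈ n.primeFactors, p.Prime := fun p hp => Nat.prime_of_mem_primeFactors hp
  have hbounds (p : ℕ) (hp : p ∈ n.primeFactors) :=
    have hd := Nat.dvd_of_mem_primeFactors hp
    localRatio_bounds (hprime p hp).two_le (fun h => h2 (h.trans hd)) (fun h => h3 (h.trans hd))
      (n.factorization p)
  have hlower_nonneg (p : ℕ) (hp : p ∈ n.primeFactors) :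
      0 ≤ if p % 12 = 7 then ((p : ℝ) ^ 2 - 1) / ((p : ℝ) ^ 2 + 1) else 1 := by
    have : (1 : ℝ) < p := by exact_mod_cast (hprime p hp).one_lt
    split_ifs
    exacts [(sq_sub_one_div_sq_add_one_pos this).le, zero_le_one]
  simp only [ite_and, prod_ite_of_true hprime]
  rw [sigma4Plus_div_sigma3Plus_eq_prod hn]
  exact ⟨prod_le_prod hlower_nonneg fun p hp => (hbounds p hp).1,
    prod_le_prod (fun p hp => (hlower_nonneg p hp).trans (hbounds p hp).1)
      fun p hp => (hbounds p hp).2⟩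

/-- Proposition 7.1 of the paper, first part: for `n₀` coprime to 6, the ratio
`σ₄⁺(n₀)/σ₃⁺(n₀)` is bounded below by `∏_{p ≡ 7 (12)} (p²−1)/(p²+1)` and above
by `∏_{p ≡ 5 (12)} (p²+1)/(p²−1)`, where the (convergent) products run over
all primes in the indicated congruence classes mod 12. -/
theorem sigma4_div_sigma3_bounds
    (n₀ : ℕ) (h : 0 < n₀) (h2 : ¬ (2 ∣ n₀)) (h3 : ¬ (3 ∣ n₀)) :
    Multipliable (fun p : {p : ℕ // p.Prime ∧ p % 12 = 7} =>
      (((p : ℕ) : ℝ) ^ 2 - 1) / (((p : ℕ) : ℝ) ^ 2 + 1)) ∧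
    Multipliable (fun p : {p : ℕ // p.Prime ∧ p % 12 = 5} =>
      (((p : ℕ) : ℝ) ^ 2 + 1) / (((p : ℕ) : ℝ) ^ 2 - 1)) ∧
    (∏' p : {p : ℕ // p.Prime ∧ p % 12 = 7},
        (((p : ℕ) : ℝ) ^ 2 - 1) / (((p : ℕ) : ℝ) ^ 2 + 1)) ≤
      sigma4Plus n₀ / sigma3Plus n₀ ∧
    sigma4Plus n₀ / sigma3Plus n₀ ≤
      ∏' p : {p : ℕ // p.Prime ∧ p % 12 = 5},
        (((p : ℕ) : ℝ) ^ 2 + 1) / (((p : ℕ) : ℝ) ^ 2 - 1) := by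
  have h7 (p : ℕ) (hp : p.Prime ∧ p % 12 = 7) : 2 ≤ p := hp.1.two_le
  have h5 (p : ℕ) (hp : p.Prime ∧ p % 12 = 5) : 2 ≤ p := hp.1.two_le
  obtain ⟨hlower, hupper⟩ := prod_ite_le_sigma4Plus_div_sigma3Plus_le_prod_ite h.ne' h2 h3
  exact ⟨multipliable_sq_sub_one_div_sq_add_one h7, multipliable_sq_add_one_div_sq_sub_one h5,
    (tprod_sq_sub_one_div_sq_add_one_le_prod_ite h7 _).trans hlower,
    hupper.trans (prod_ite_le_tprod_sq_add_one_div_sq_sub_one h5 _)⟩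
end

section
/- For z in the upper half-plane, define the Jacobi theta functions θ₂(z) = Σ_{m∈ℤ} e^{πi(m+1/2)²z}, θ₃(z) = Σ_{m∈ℤ} e^{πim²z}, θ₄(z) = Σ_{m∈ℤ} (−1)^m e^{πim²z}. Then for all z with Im z > 0: (θ₃(z)⁶ + θ₄(z)⁶)/2 + 4·(θ₂(4z)⁶ + θ₃(4z)⁶) = 5·θ₃(2z)⁶. (Equivalently, the theta series of the lattices D₆, D₆*, and ℤ⁶ satisfy ϑ_{D₆}(z) + 4·ϑ_{D₆*}(4z) = 5·ϑ_{ℤ⁶}(2z).) -/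
open Complex

/-- The Jacobi theta function `θ₂(z) = Σ_{m∈ℤ} e^{πi(m+1/2)²z}`. -/
noncomputable def jacobiTheta2' (z : ℂ) : ℂ :=
  ∑' m : ℤ, Complex.exp (Real.pi * Complex.I * ((m : ℂ) + 1 / 2) ^ 2 * z)

/-- The Jacobi theta function `θ₃(z) = Σ_{m∈ℤ} e^{πim²z}`. -/
noncomputable def jacobiTheta3' (z : ℂ) : ℂ :=
  ∑' m : ℤ, Complex.exp (Real.pi * Complex.I * (m : ℂ) ^ 2 * z)

/-- The Jacobi theta function `θ₄(z) = Σ_{m∈ℤ} (−1)^m e^{πim²z}`. -/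
noncomputable def jacobiTheta4' (z : ℂ) : ℂ :=
  ∑' m : ℤ, ((-1 : ℂ) ^ m) * Complex.exp (Real.pi * Complex.I * (m : ℂ) ^ 2 * z)

/- ### Auxiliary lemmas -/

lemma summableTheta3 {τ : ℂ} (h : 0 < τ.im) :
    Summable fun m : ℤ => Complex.exp (Real.pi * Complex.I * (m : ℂ) ^ 2 * τ) := by
  have := (summable_jacobiTheta₂_term_iff 0 τ).mpr h
  simpa [jacobiTheta₂_term] using this

lemma summableTheta2 {τ : ℂ} (h : 0 < τ.im) :
    Summable fun m : ℤ => Complex.exp (Real.pi * Complex.I * ((m : ℂ) + 1 / 2) ^ 2 * τ) := by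
  have h1 := (summable_jacobiTheta₂_term_iff (τ / 2) τ).mpr h
  have h2 := h1.mul_left (Complex.exp (Real.pi * Complex.I * τ / 4))
  refine h2.congr fun n => ?_
  simp only [jacobiTheta₂_term, ← Complex.exp_add]
  congr 1
  ring

lemma summableTheta4 {τ : ℂ} (h : 0 < τ.im) :
    Summable fun m : ℤ =>
      ((-1 : ℂ) ^ m) * Complex.exp (Real.pi * Complex.I * (m : ℂ) ^ 2 * τ) := by
  refine Summable.of_norm ?_
  have hn := summable_norm_iff.mpr (summableTheta3 h)
  refine hn.congr fun n => ?_
  simp [norm_mul]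

/-- Splitting a sum over a sum type. -/
lemma tsum_sum_type {α β : Type*} {f : α ⊕ β → ℂ} (hf : Summable f) :
    ∑' x, f x = (∑' a, f (Sum.inl a)) + ∑' b, f (Sum.inr b) := by
  have h1 : HasSum (f ∘ Sum.inl) (∑' a, f (Sum.inl a)) :=
    (hf.comp_injective Sum.inl_injective).hasSum
  have h2 : HasSum (f ∘ Sum.inr) (∑' b, f (Sum.inr b)) :=
    (hf.comp_injective Sum.inr_injective).hasSum
  have h1' := Sum.inl_injective.hasSum_range_iff.mpr h1
  have h2' := Sum.inr_injective.hasSum_range_iff.mpr h2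
  rw [← Set.compl_range_inl] at h2'
  exact (h1'.add_compl h2').tsum_eq

/-- The even/odd decomposition of `ℤ` as an equiv from `ℤ ⊕ ℤ`. -/
noncomputable def evenOddEquiv : ℤ ⊕ ℤ ≃ ℤ :=
  Equiv.ofBijective (Sum.elim (fun k => 2 * k) (fun k => 2 * k + 1)) (by
    constructor
    · rintro (a | a) (b | b) h <;>
        simp only [Sum.elim_inl, Sum.elim_inr] at h
      · exact congrArg Sum.inl (by omega)
      · exact absurd h (by omega)
      · exact absurd h (by omega)
      · exact congrArg Sum.inr (by omega)
    · intro m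
      rcases Int.even_or_odd m with ⟨k, hk⟩ | ⟨k, hk⟩
      · exact ⟨.inl k, by simp only [Sum.elim_inl]; omega⟩
      · exact ⟨.inr k, by simp only [Sum.elim_inr]; omega⟩)

lemma tsum_int_even_odd {f : ℤ → ℂ} (hf : Summable f) :
    ∑' m : ℤ, f m = (∑' k : ℤ, f (2 * k)) + ∑' k : ℤ, f (2 * k + 1) := by
  rw [← Equiv.tsum_eq evenOddEquiv f,
    tsum_sum_type (show Summable fun c : ℤ ⊕ ℤ => f (evenOddEquiv c) from
      evenOddEquiv.summable_iff.mpr hf)]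
  rfl

/-- The parity-of-sum decomposition of `ℤ × ℤ`. -/
noncomputable def pairEquiv : (ℤ × ℤ) ⊕ (ℤ × ℤ) ≃ ℤ × ℤ :=
  Equiv.ofBijective
    (Sum.elim (fun p => (p.1 + p.2, p.1 - p.2)) (fun p => (p.1 + p.2 + 1, p.1 - p.2))) (by
    constructor
    · rintro (⟨a, b⟩ | ⟨a, b⟩) (⟨c, d⟩ | ⟨c, d⟩) h <;>
        simp only [Sum.elim_inl, Sum.elim_inr, Prod.mk.injEq] at h
      · simp only [Sum.inl.injEq, Prod.mk.injEq]; omega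
      · exfalso; omega
      · exfalso; omega
      · simp only [Sum.inr.injEq, Prod.mk.injEq]; omega
    · rintro ⟨m, n⟩
      rcases Int.even_or_odd (m + n) with ⟨k, hk⟩ | ⟨k, hk⟩
      · exact ⟨.inl (k, m - k), by
          simp only [Sum.elim_inl, Prod.mk.injEq]; constructor <;> omega⟩
      · exact ⟨.inr (k, m - k - 1), by
          simp only [Sum.elim_inr, Prod.mk.injEq]; constructor <;> omega⟩)

lemma theta3_split {z : ℂ} (hz : 0 < z.im) :
    jacobiTheta3' z = jacobiTheta3' (4 * z) + jacobiTheta2' (4 * z) := by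
  unfold jacobiTheta3' jacobiTheta2'
  rw [tsum_int_even_odd (summableTheta3 hz)]
  congr 1
  · refine tsum_congr fun k => ?_
    congr 1
    push_cast
    ring
  · refine tsum_congr fun k => ?_
    congr 1
    push_cast
    ring

lemma theta4_split {z : ℂ} (hz : 0 < z.im) :
    jacobiTheta4' z = jacobiTheta3' (4 * z) - jacobiTheta2' (4 * z) := by
  unfold jacobiTheta4' jacobiTheta3' jacobiTheta2'
  rw [tsum_int_even_odd (summableTheta4 hz), sub_eq_add_neg]
  congr 1
  · refine tsum_congr fun k => ?_
    rw [(even_two_mul k).neg_one_zpow, one_mul]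
    congr 1
    push_cast
    ring
  · rw [← tsum_neg]
    refine tsum_congr fun k => ?_
    rw [(odd_two_mul_add_one k).neg_one_zpow, neg_one_mul, neg_inj]
    congr 1
    push_cast
    ring

lemma im_mul_pos {c : ℝ} (hc : 0 < c) {z : ℂ} (hz : 0 < z.im) : 0 < ((c : ℂ) * z).im := by
  rw [Complex.mul_im]
  simp only [Complex.ofReal_re, Complex.ofReal_im, zero_mul, add_zero]
  positivity

lemma theta3_sq {z : ℂ} (hz : 0 < z.im) :
    jacobiTheta3' (2 * z) ^ 2 = jacobiTheta3' (4 * z) ^ 2 + jacobiTheta2' (4 * z) ^ 2 := by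
  have h2z : 0 < ((2 : ℂ) * z).im := by exact_mod_cast im_mul_pos two_pos hz
  have h4z : 0 < ((4 : ℂ) * z).im := by exact_mod_cast im_mul_pos four_pos hz
  set f : ℤ → ℂ := fun m => Complex.exp (Real.pi * Complex.I * (m : ℂ) ^ 2 * (2 * z)) with hfdef
  have hf : Summable f := summableTheta3 h2z
  have hfn : Summable fun m => ‖f m‖ := summable_norm_iff.mpr hf
  have hF : Summable fun p : ℤ × ℤ => f p.1 * f p.2 := summable_mul_of_summable_norm hfn hfn
  have h1 : jacobiTheta3' (2 * z) ^ 2 = ∑' p : ℤ × ℤ, f p.1 * f p.2 := by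
    rw [sq]
    exact Summable.tsum_mul_tsum hf hf hF
  rw [h1, ← Equiv.tsum_eq pairEquiv, tsum_sum_type (show Summable fun c : (ℤ × ℤ) ⊕ (ℤ × ℤ) =>
      f (pairEquiv c).1 * f (pairEquiv c).2 from pairEquiv.summable_iff.mpr hF)]
  congr 1
  · set g : ℤ → ℂ := fun m => Complex.exp (Real.pi * Complex.I * (m : ℂ) ^ 2 * (4 * z))
      with hgdef
    have hg : Summable g := summableTheta3 h4z
    have hgn : Summable fun m => ‖g m‖ := summable_norm_iff.mpr hg
    have hG : Summable fun p : ℤ × ℤ => g p.1 * g p.2 := summable_mul_of_summable_norm hgn hgn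
    have h2 : jacobiTheta3' (4 * z) ^ 2 = ∑' p : ℤ × ℤ, g p.1 * g p.2 := by
      rw [sq]
      exact Summable.tsum_mul_tsum hg hg hG
    rw [h2]
    refine tsum_congr fun p => ?_
    obtain ⟨a, b⟩ := p
    show f (a + b) * f (a - b) = g a * g b
    rw [hfdef, hgdef]
    simp only [← Complex.exp_add]
    congr 1
    push_cast
    ring
  · set g : ℤ → ℂ := fun m => Complex.exp (Real.pi * Complex.I * ((m : ℂ) + 1 / 2) ^ 2 * (4 * z))
      with hgdef
    have hg : Summable g := summableTheta2 h4z
    have hgn : Summable fun m => ‖g m‖ := summable_norm_iff.mpr hg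
    have hG : Summable fun p : ℤ × ℤ => g p.1 * g p.2 := summable_mul_of_summable_norm hgn hgn
    have h2 : jacobiTheta2' (4 * z) ^ 2 = ∑' p : ℤ × ℤ, g p.1 * g p.2 := by
      rw [sq]
      exact Summable.tsum_mul_tsum hg hg hG
    rw [h2]
    refine tsum_congr fun p => ?_
    obtain ⟨a, b⟩ := p
    show f (a + b + 1) * f (a - b) = g a * g b
    rw [hfdef, hgdef]
    simp only [← Complex.exp_add]
    congr 1
    push_cast
    ring

/-- The identity (8.1) of the paper between the theta series of `D₆`, `D₆*`,
and `ℤ⁶`:  `ϑ_{D₆}(z) + 4·ϑ_{D₆*}(4z) = 5·ϑ_{ℤ⁶}(2z)`, i.e.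
`(θ₃(z)⁶ + θ₄(z)⁶)/2 + 4(θ₂(4z)⁶ + θ₃(4z)⁶) = 5·θ₃(2z)⁶`. -/
theorem theta_D6_D6star_Z6_relation (z : ℂ) (hz : 0 < z.im) :
    (jacobiTheta3' z ^ 6 + jacobiTheta4' z ^ 6) / 2 +
        4 * (jacobiTheta2' (4 * z) ^ 6 + jacobiTheta3' (4 * z) ^ 6) =
      5 * jacobiTheta3' (2 * z) ^ 6 := by
  have hA := theta3_split hz
  have hB := theta4_split hz
  have hC := theta3_sq hz
  have h6 : jacobiTheta3' (2 * z) ^ 6 = (jacobiTheta3' (2 * z) ^ 2) ^ 3 := by ring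
  rw [hA, hB, h6, hC]
  ring
end

section
/- For z in the upper half-plane, define the Jacobi theta functions θ₃(z) = Σ_{m∈ℤ} e^{πim²z} and θ₄(z) = Σ_{m∈ℤ} (−1)^m e^{πim²z}. Then for all z with Im z > 0: 8·θ₃(2z)⁶ = θ₃(z)⁶ + θ₄(z)⁶ + 3·θ₃(z)⁴·θ₄(z)² + 3·θ₃(z)²·θ₄(z)⁴. -/
open Complex

lemma summable_norm_theta_term {z : ℂ} (hz : 0 < z.im) :
    Summable fun m : ℤ => ‖Complex.exp (Real.pi * Complex.I * (m : ℂ) ^ 2 * z)‖ := by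
  have hlt : Real.exp (-Real.pi * z.im) < 1 :=
    Real.exp_lt_one_iff.mpr (mul_neg_of_neg_of_pos (neg_lt_zero.mpr Real.pi_pos) hz)
  have h0 : (0 : ℝ) ≤ Real.exp (-Real.pi * z.im) := (Real.exp_pos _).le
  have hgeo : Summable fun n : ℤ => Real.exp (-Real.pi * z.im) ^ n.natAbs := by
    apply Summable.of_nat_of_neg
    · simpa using summable_geometric_of_lt_one h0 hlt
    · simpa using summable_geometric_of_lt_one h0 hlt
  exact hgeo.of_nonneg_of_le (fun _ => norm_nonneg _) (fun n => norm_exp_mul_sq_le hz n)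

lemma summable_norm_theta4_term {z : ℂ} (hz : 0 < z.im) :
    Summable fun m : ℤ =>
      ‖((-1 : ℂ) ^ m) * Complex.exp (Real.pi * Complex.I * (m : ℂ) ^ 2 * z)‖ := by
  have := summable_norm_theta_term hz
  apply this.congr
  intro m
  rw [norm_mul, norm_zpow]
  simp

lemma neg_one_zpow_even {k : ℤ} (hk : Even k) : ((-1 : ℂ) ^ k) = 1 := by
  obtain ⟨j, rfl⟩ := hk
  rw [← two_mul, zpow_mul]
  norm_num

lemma neg_one_zpow_odd {k : ℤ} (hk : Odd k) : ((-1 : ℂ) ^ k) = -1 := by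
  obtain ⟨j, rfl⟩ := hk
  rw [zpow_add₀ (by norm_num : (-1 : ℂ) ≠ 0), zpow_mul]
  norm_num

lemma theta3_sq_add_theta4_sq {z : ℂ} (hz : 0 < z.im) :
    jacobiTheta3' z ^ 2 + jacobiTheta4' z ^ 2 = 2 * jacobiTheta3' (2 * z) ^ 2 := by
  set f3 : ℤ → ℂ := fun m => Complex.exp (Real.pi * Complex.I * (m : ℂ) ^ 2 * z) with hf3def
  set f4 : ℤ → ℂ := fun m =>
    ((-1 : ℂ) ^ m) * Complex.exp (Real.pi * Complex.I * (m : ℂ) ^ 2 * z) with hf4def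
  have hn3 : Summable fun m : ℤ => ‖f3 m‖ := summable_norm_theta_term hz
  have hn4 : Summable fun m : ℤ => ‖f4 m‖ := summable_norm_theta4_term hz
  set g : ℤ × ℤ → ℂ := fun p =>
    (1 + (-1 : ℂ) ^ (p.1 + p.2)) *
      Complex.exp (Real.pi * Complex.I * ((p.1 : ℂ) ^ 2 + (p.2 : ℂ) ^ 2) * z) with hgdef
  have hexp : ∀ m n : ℤ, f3 m * f3 n =
      Complex.exp (Real.pi * Complex.I * ((m : ℂ) ^ 2 + (n : ℂ) ^ 2) * z) := by
    intro m n
    rw [hf3def, ← Complex.exp_add]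
    ring_nf
  -- LHS as a double sum
  have hlhs : jacobiTheta3' z ^ 2 + jacobiTheta4' z ^ 2 = ∑' p : ℤ × ℤ, g p := by
    have h3 : jacobiTheta3' z ^ 2 = ∑' p : ℤ × ℤ, f3 p.1 * f3 p.2 := by
      rw [sq]; exact tsum_mul_tsum_of_summable_norm hn3 hn3
    have h4 : jacobiTheta4' z ^ 2 = ∑' p : ℤ × ℤ, f4 p.1 * f4 p.2 := by
      rw [sq]; exact tsum_mul_tsum_of_summable_norm hn4 hn4
    rw [h3, h4, ← Summable.tsum_add (summable_mul_of_summable_norm hn3 hn3)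
      (summable_mul_of_summable_norm hn4 hn4)]
    refine tsum_congr fun p => ?_
    have h44 : f4 p.1 * f4 p.2 = (-1 : ℂ) ^ (p.1 + p.2) * (f3 p.1 * f3 p.2) := by
      rw [hf4def, hf3def, zpow_add₀ (by norm_num : (-1 : ℂ) ≠ 0)]
      ring
    rw [h44, hexp p.1 p.2, hgdef]
    ring
  rw [hlhs]
  -- RHS: reindex via (u,v) ↦ (u+v, u-v)
  set e : ℤ × ℤ → ℤ × ℤ := fun p => (p.1 + p.2, p.1 - p.2) with hedef
  have he : Function.Injective e := by
    intro p q h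
    rw [hedef, Prod.mk.injEq] at h
    exact Prod.ext (by omega) (by omega)
  have hsupp : Function.support g ⊆ Set.range e := by
    intro p hp
    rcases Int.even_or_odd (p.1 + p.2) with hev | hod
    · obtain ⟨u, hu⟩ := hev
      exact ⟨(u, p.1 - u), Prod.ext (show u + (p.1 - u) = p.1 by omega)
        (show u - (p.1 - u) = p.2 by omega)⟩
    · exfalso
      apply hp
      rw [hgdef]
      simp [neg_one_zpow_odd hod]
  have h2z : (0 : ℝ) < (2 * z).im := by simp only [Complex.mul_im]; simp; linarith
  set f3' : ℤ → ℂ := fun m => Complex.exp (Real.pi * Complex.I * (m : ℂ) ^ 2 * (2 * z))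
    with hf3'def
  have hn3' : Summable fun m : ℤ => ‖f3' m‖ := summable_norm_theta_term h2z
  have h2 : 2 * jacobiTheta3' (2 * z) ^ 2 = ∑' q : ℤ × ℤ, 2 * (f3' q.1 * f3' q.2) := by
    rw [tsum_mul_left]
    congr 1
    rw [sq, jacobiTheta3']
    exact tsum_mul_tsum_of_summable_norm hn3' hn3'
  rw [h2, ← he.tsum_eq hsupp]
  refine tsum_congr fun q => ?_
  have heven : Even ((q.1 + q.2) + (q.1 - q.2)) := ⟨q.1, by ring⟩
  have hc : (1 + (-1 : ℂ) ^ ((q.1 + q.2) + (q.1 - q.2))) = 2 := by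
    rw [neg_one_zpow_even heven]; norm_num
  show (1 + (-1 : ℂ) ^ ((q.1 + q.2) + (q.1 - q.2))) *
      Complex.exp (Real.pi * Complex.I *
        (((q.1 + q.2 : ℤ) : ℂ) ^ 2 + ((q.1 - q.2 : ℤ) : ℂ) ^ 2) * z) =
    2 * (f3' q.1 * f3' q.2)
  rw [hc, hf3'def, ← Complex.exp_add]
  push_cast
  ring_nf

/-- Equation (8.9) of the paper: the identity
`8·θ₃(2z)⁶ = θ₃(z)⁶ + θ₄(z)⁶ + 3θ₃(z)⁴θ₄(z)² + 3θ₃(z)²θ₄(z)⁴`, expressing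
`ϑ_{ℤ⁶}(2z)` in terms of `θ₃(z)` and `θ₄(z)`. -/
theorem theta3_two_z_pow_six (z : ℂ) (hz : 0 < z.im) :
    8 * jacobiTheta3' (2 * z) ^ 6 =
      jacobiTheta3' z ^ 6 + jacobiTheta4' z ^ 6 +
        3 * jacobiTheta3' z ^ 4 * jacobiTheta4' z ^ 2 +
        3 * jacobiTheta3' z ^ 2 * jacobiTheta4' z ^ 4 := by
  have key := theta3_sq_add_theta4_sq hz
  linear_combination (-(4 * jacobiTheta3' (2 * z) ^ 4 +
    2 * jacobiTheta3' (2 * z) ^ 2 * (jacobiTheta3' z ^ 2 + jacobiTheta4' z ^ 2) +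
    (jacobiTheta3' z ^ 2 + jacobiTheta4' z ^ 2) ^ 2)) * key
end
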